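/- For all non-negative integers m, k with k ≥ 2, the integrals I_{m,k} = ∫₀^{π/2} x^{2m} cos^{2k-1}(x) dx satisfy the recurrence ((2k-2)/(2k-1)) I_{m,k-1} − I_{m,k} = (2m(2m-1)/(2k-1)²) I_{m-1,k} (for m ≥ 1), and I_{m,1} + 2m(2m-1) I_{m-1,1} = (π/2)^{2m}. -/

import Mathlib

open Real Finset

/-- `I_{m,k} = ∫₀^{π/2} x^{2m} cos^{2k-1}(x) dx`. -/
noncomputable def I (m k : ℕ) : ℝ := ∫ x in (0:ℝ)..(π/2), x^(2*m) * (Real.cos x)^(2*k-1)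

/-!
Integrate by parts over `[0, π/2]`, differentiating `x^(p+1) cos^(q+1) x` and
`x^(p+1) sin x cos^(q+1) x`: the boundary terms vanish because `x^(p+1) = 0` at `0` and
`cos (π/2) = 0`. Eliminating the mixed moment `∫ x^(p+1) sin x cos^(q+1) x` between the two
relations (after `sin² = 1 - cos²`) gives the recurrence in the exponent of `x`. The second
identity is two integrations by parts of `x^(p+2) cos x`, where `sin (π/2) = 1` leaves a
boundary term.
-/

open intervalIntegral

noncomputable def cosMoment (p q : ℕ) : ℝ := ∫ x in (0:ℝ)..(π / 2), x ^ p * cos x ^ q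

noncomputable def sinCosMoment (p q : ℕ) : ℝ := ∫ x in (0:ℝ)..(π / 2), x ^ p * (sin x * cos x ^ q)

theorem succ_mul_cosMoment_succ (p q : ℕ) :
    (p + 1 : ℝ) * cosMoment p (q + 1) = (q + 1) * sinCosMoment (p + 1) q := by
  have hderiv (x : ℝ) : HasDerivAt (fun y => y ^ (p + 1) * cos y ^ (q + 1))
      ((p + 1) * (x ^ p * cos x ^ (q + 1)) - (q + 1) * (x ^ (p + 1) * (sin x * cos x ^ q))) x := by
    refine ((hasDerivAt_pow (p + 1) x).mul ((hasDerivAt_cos x).fun_pow (q + 1))).congr_deriv ?_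
    simp only [Nat.add_sub_cancel]
    push_cast
    ring
  have hFTC := integral_eq_sub_of_hasDerivAt (fun x _ => hderiv x)
    (Continuous.intervalIntegrable (by fun_prop) 0 (π / 2))
  rw [integral_sub, integral_const_mul, integral_const_mul] at hFTC
  · simp [cos_pi_div_two] at hFTC
    rw [cosMoment, sinCosMoment]
    linarith
  all_goals exact Continuous.intervalIntegrable (by fun_prop) _ _

theorem succ_mul_sinCosMoment_succ (p q : ℕ) :
    (p + 1 : ℝ) * sinCosMoment p (q + 1) =
      (q + 1) * cosMoment (p + 1) q - (q + 2) * cosMoment (p + 1) (q + 2) := by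
  have hderiv (x : ℝ) : HasDerivAt (fun y => y ^ (p + 1) * (sin y * cos y ^ (q + 1)))
      ((p + 1) * (x ^ p * (sin x * cos x ^ (q + 1))) -
        ((q + 1) * (x ^ (p + 1) * cos x ^ q) - (q + 2) * (x ^ (p + 1) * cos x ^ (q + 2)))) x := by
    refine ((hasDerivAt_pow (p + 1) x).mul
      ((hasDerivAt_sin x).mul ((hasDerivAt_cos x).fun_pow (q + 1)))).congr_deriv ?_
    simp only [Nat.add_sub_cancel, Pi.mul_apply]
    push_cast
    linear_combination (-((q : ℝ) + 1)) * x ^ (p + 1) * cos x ^ q * sin_sq_add_cos_sq x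
  have hFTC := integral_eq_sub_of_hasDerivAt (fun x _ => hderiv x)
    (Continuous.intervalIntegrable (by fun_prop) 0 (π / 2))
  rw [integral_sub, integral_sub, integral_const_mul, integral_const_mul,
    integral_const_mul] at hFTC
  · simp [cos_pi_div_two] at hFTC
    rw [cosMoment, cosMoment, sinCosMoment]
    linarith
  all_goals exact Continuous.intervalIntegrable (by fun_prop) _ _

theorem cosMoment_add_two_recurrence (p q : ℕ) :
    (q + 2 : ℝ) * ((q + 1) * cosMoment (p + 2) q - (q + 2) * cosMoment (p + 2) (q + 2)) =
      (p + 2) * (p + 1) * cosMoment p (q + 2) := by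
  have h₁ : (p + 1 : ℝ) * cosMoment p (q + 2) = (q + 2) * sinCosMoment (p + 1) (q + 1) := by
    exact_mod_cast succ_mul_cosMoment_succ p (q + 1)
  have h₂ : (p + 2 : ℝ) * sinCosMoment (p + 1) (q + 1) =
      (q + 1) * cosMoment (p + 2) q - (q + 2) * cosMoment (p + 2) (q + 2) := by
    exact_mod_cast succ_mul_sinCosMoment_succ (p + 1) q
  linear_combination -(q + 2 : ℝ) * h₂ - (p + 2 : ℝ) * h₁

theorem cosMoment_add_two_one (p : ℕ) :
    cosMoment (p + 2) 1 + (p + 2) * (p + 1) * cosMoment p 1 = (π / 2) ^ (p + 2) := by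
  have hderiv (x : ℝ) :
      HasDerivAt (fun y => y ^ (p + 2) * sin y + (p + 2) * (y ^ (p + 1) * cos y))
        (x ^ (p + 2) * cos x ^ 1 + (p + 2) * (p + 1) * (x ^ p * cos x ^ 1)) x := by
    refine (((hasDerivAt_pow (p + 2) x).mul (hasDerivAt_sin x)).add
      (((hasDerivAt_pow (p + 1) x).mul (hasDerivAt_cos x)).const_mul ((p : ℝ) + 2))).congr_deriv ?_
    simp only [Nat.add_sub_cancel]
    push_cast
    ring
  have hFTC := integral_eq_sub_of_hasDerivAt (fun x _ => hderiv x)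
    (Continuous.intervalIntegrable (by fun_prop) 0 (π / 2))
  rw [integral_add, integral_const_mul] at hFTC
  · simpa [cos_pi_div_two, cosMoment] using hFTC
  all_goals exact Continuous.intervalIntegrable (by fun_prop) _ _

theorem stmt_9 (m k : ℕ) (hm : 1 ≤ m) (hk : 2 ≤ k) :
    (((2*k:ℝ)-2)/((2*k:ℝ)-1)) * I m (k-1) - I m k =
      ((2*m:ℝ)*((2*m:ℝ)-1)/((2*k:ℝ)-1)^2) * I (m-1) k ∧
    I m 1 + (2*m:ℝ)*((2*m:ℝ)-1) * I (m-1) 1 = (π/2)^(2*m) := by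
  obtain ⟨m, rfl⟩ := Nat.exists_eq_add_of_le' hm
  obtain ⟨k, rfl⟩ := Nat.exists_eq_add_of_le' hk
  have hrec : (2 * k + 3 : ℝ) *
      ((2 * k + 2) * I (m + 1) (k + 1) - (2 * k + 3) * I (m + 1) (k + 2)) =
        (2 * m + 2) * (2 * m + 1) * I m (k + 2) := by
    exact_mod_cast cosMoment_add_two_recurrence (2 * m) (2 * k + 1)
  have hbase : I (m + 1) 1 + (2 * m + 2) * (2 * m + 1) * I m 1 = (π / 2) ^ (2 * m + 2) := by
    exact_mod_cast cosMoment_add_two_one (2 * m)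
  simp only [Nat.add_sub_cancel, show k + 2 - 1 = k + 1 by omega]
  push_cast
  constructor
  · rw [show 2 * ((k : ℝ) + 2) - 1 = 2 * k + 3 by ring]
    field_simp
    linear_combination hrec
  · linear_combination hbase
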